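/- arXiv:2111.00156 — 2 statements merged into one kernel-verified Lean document; each statement's English description precedes it below -/
import Mathlib

section
/- Let (M, F) be a strongly pseudoconvex complex Finsler manifold. Then the holomorphic sectional curvature tensors of the extended canonical connection ∇^c and of the canonical connection ∇ satisfy K_{αβ̄μν̄} = R_{αβ̄μν̄} − ¼[δ_β̄(G_{μλ̄}) − δ_λ̄(G_{μβ̄})]G^{λ̄γ}[δ_α(G_{γν̄}) − δ_γ(G_{αν̄})]. Consequently, for all horizontal vectors H = H^αδ_α and K = K^μδ_μ one has (K_{αβ̄μν̄} − R_{αβ̄μν̄})H^αH̄^βK^μK̄^ν ≤ 0. -/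
/-!
A local-coordinate formalization of strongly pseudoconvex complex Finsler metrics,
following Abate–Patrizio and Munteanu.  A point of the (slit) holomorphic tangent
bundle `M̃ = T^{1,0}M ∖ {0}` is represented in a holomorphic coordinate chart by a
pair `(z, v) ∈ ℂⁿ × ℂⁿ`.  All derivatives are genuine Wirtinger derivatives
(expressed through `fderiv ℝ`), and all the tensors of the Chern–Finsler
connection `D`, the canonical connection `∇` of Munteanu and its extension `∇ᶜ`
are defined by their standard local-coordinate expressions.  Horizontal
`(p,q)`-forms on the projective tangent bundle `PM̃` are represented by their
(alternating, `0`-homogeneous) coefficient arrays, in the convention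
`φ = (1/(p! q!)) φ_{I J̄} dz^I ∧ dz̄^J`.
The invariant integral `∫_{PM̃} · dμ_{PM̃}` (which exists when the base manifold
`M` is compact) is encoded by the structure `PTMIntegral`; a hypothesis
`(vol : PTMIntegral F)` plays the role of the compactness of `M`.
-/

open ComplexConjugate BigOperators

noncomputable section

namespace CFG

/-- Points of the holomorphic tangent bundle in local coordinates: `(z, v)`. -/
abbrev Pt (n : ℕ) : Type := (Fin n → ℂ) × (Fin n → ℂ)

/-- The slit domain `M̃` : `v ≠ 0`. -/
def slit (n : ℕ) : Set (Pt n) := {p | p.2 ≠ 0}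

variable {n : ℕ}

/-- Wirtinger derivative `∂/∂z^μ`. -/
def dz (μ : Fin n) (f : Pt n → ℂ) : Pt n → ℂ := fun p =>
  (1 / 2 : ℂ) * (fderiv ℝ f p (Pi.single μ 1, 0) -
    Complex.I * fderiv ℝ f p (Pi.single μ Complex.I, 0))

/-- Wirtinger derivative `∂/∂z̄^μ`. -/
def dzb (μ : Fin n) (f : Pt n → ℂ) : Pt n → ℂ := fun p =>
  (1 / 2 : ℂ) * (fderiv ℝ f p (Pi.single μ 1, 0) +
    Complex.I * fderiv ℝ f p (Pi.single μ Complex.I, 0))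

/-- Wirtinger derivative `∂/∂v^μ`. -/
def dv (μ : Fin n) (f : Pt n → ℂ) : Pt n → ℂ := fun p =>
  (1 / 2 : ℂ) * (fderiv ℝ f p (0, Pi.single μ 1) -
    Complex.I * fderiv ℝ f p (0, Pi.single μ Complex.I))

/-- Wirtinger derivative `∂/∂v̄^μ`. -/
def dvb (μ : Fin n) (f : Pt n → ℂ) : Pt n → ℂ := fun p =>
  (1 / 2 : ℂ) * (fderiv ℝ f p (0, Pi.single μ 1) +
    Complex.I * fderiv ℝ f p (0, Pi.single μ Complex.I))

/-- Wirtinger derivative `∂/∂z^μ` for functions on the base manifold. -/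
def bdz (μ : Fin n) (f : (Fin n → ℂ) → ℂ) : (Fin n → ℂ) → ℂ := fun z =>
  (1 / 2 : ℂ) * (fderiv ℝ f z (Pi.single μ 1) -
    Complex.I * fderiv ℝ f z (Pi.single μ Complex.I))

/-- Wirtinger derivative `∂/∂z̄^μ` for functions on the base manifold. -/
def bdzb (μ : Fin n) (f : (Fin n → ℂ) → ℂ) : (Fin n → ℂ) → ℂ := fun z =>
  (1 / 2 : ℂ) * (fderiv ℝ f z (Pi.single μ 1) +
    Complex.I * fderiv ℝ f z (Pi.single μ Complex.I))

/-- A real function viewed as a complex-valued one. -/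
def cplx (G : Pt n → ℝ) : Pt n → ℂ := fun p => (G p : ℂ)

/-- Levi matrix entry `G_{αβ̄} = ∂²G/∂v^α ∂v̄^β`. -/
def levi (G : Pt n → ℝ) (α β : Fin n) : Pt n → ℂ := dv α (dvb β (cplx G))

/-- The coefficient array of a horizontal `(p,q)`-form, in the convention
`φ = (1/(p! q!)) φ_{α₁⋯αₚ β̄₁⋯β̄__q} dz^{α₁} ∧ ⋯ ∧ dz̄^{β_q}`. -/
abbrev HForm (n p q : ℕ) : Type := (Fin p → Fin n) → (Fin q → Fin n) → Pt n → ℂ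

/-- The sign of a permutation, as a complex number. -/
def permSign {m : ℕ} (σ : Equiv.Perm (Fin m)) : ℂ := ((Equiv.Perm.sign σ : ℤ) : ℂ)

/-- The positive `(1,1)`-form `√-1 α ∧ ᾱ` built from the `(1,0)`-covector
`α = a_μ dz^μ`. -/
def oneone (a : Fin n → ℂ) : HForm n 1 1 := fun I J _ =>
  Complex.I * a (I 0) * conj (a (J 0))

/-- Wedge product of horizontal forms (coefficient arrays, shuffle formula). -/
def wedge {p q p' q' : ℕ} (φ : HForm n p q) (ψ : HForm n p' q') :
    HForm n (p + p') (q + q') := fun I J x =>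
  (((p.factorial * p'.factorial * q.factorial * q'.factorial : ℕ) : ℂ))⁻¹ *
    ∑ σ : Equiv.Perm (Fin (p + p')), ∑ τ : Equiv.Perm (Fin (q + q')),
      permSign σ * permSign τ *
        (φ (fun i => I (σ (Fin.castAdd p' i))) (fun j => J (τ (Fin.castAdd q' j))) x *
          ψ (fun i => I (σ (Fin.natAdd p i))) (fun j => J (τ (Fin.natAdd q j))) x)

/-- The density of a top-degree `(n,n)` horizontal form with respect to the
positive volume form `√-1^{n²} dz^1 ∧ ⋯ ∧ dz^n ∧ dz̄^1 ∧ ⋯ ∧ dz̄^n`. -/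
def topVal {m : ℕ} (Φ : HForm n m m) (h : m ≤ n) : Pt n → ℂ := fun x =>
  Φ (fun j => Fin.castLE h j) (fun j => Fin.castLE h j) x / Complex.I ^ (n ^ 2)

/-- `φ` is (the coefficient array of) a smooth horizontal `(p,q)`-form on `PM̃`:
it is alternating in each group of indices, smooth on the slit bundle, and its
coefficients are `0`-homogeneous with respect to the fibre coordinate `v`. -/
def IsHorizontalForm {p q : ℕ} (φ : HForm n p q) : Prop :=
  (∀ (σ : Equiv.Perm (Fin p)) (I : Fin p → Fin n) (J : Fin q → Fin n) (x : Pt n),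
      φ (I ∘ σ) J x = permSign σ * φ I J x) ∧
  (∀ (τ : Equiv.Perm (Fin q)) (I : Fin p → Fin n) (J : Fin q → Fin n) (x : Pt n),
      φ I (J ∘ τ) x = permSign τ * φ I J x) ∧
  (∀ I J, ContDiffOn ℝ (⊤ : ℕ∞) (φ I J) (slit n)) ∧
  (∀ I J (z v : Fin n → ℂ) (ζ : ℂ), ζ ≠ 0 → v ≠ 0 →
      φ I J (z, ζ • v) = φ I J (z, v))

/-- A strongly pseudoconvex complex Finsler metric on (a chart of) `M`,
recorded through `G = F²`. -/
structure SPCF (n : ℕ) where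
  /-- `G = F²`. -/
  G : Pt n → ℝ
  contG : Continuous G
  smoothG : ContDiffOn ℝ (⊤ : ℕ∞) G (slit n)
  posG : ∀ p ∈ slit n, 0 < G p
  /-- `F(z, ζv) = |ζ| F(z,v)`, i.e. `G(z, ζv) = |ζ|² G(z,v)`. -/
  homogG : ∀ (z v : Fin n → ℂ) (ζ : ℂ), G (z, ζ • v) = ‖ζ‖ ^ 2 * G (z, v)
  /-- The Levi matrix `(G_{αβ̄})` is positive definite on the slit bundle. -/
  posdef : ∀ p ∈ slit n, ∀ w : Fin n → ℂ, w ≠ 0 →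
    0 < (∑ α, ∑ β, levi G α β p * w α * conj (w β)).re ∧
      (∑ α, ∑ β, levi G α β p * w α * conj (w β)).im = 0

namespace SPCF

variable (F : SPCF n)

/-- `G` as a complex-valued function. -/
def Gc : Pt n → ℂ := cplx F.G

/-- The fundamental tensor `G_{αβ̄}`. -/
def Gm (α β : Fin n) : Pt n → ℂ := levi F.G α β

/-- The Levi matrix at a point. -/
def Levi (p : Pt n) : Matrix (Fin n) (Fin n) ℂ := Matrix.of fun α β => F.Gm α β p

/-- The inverse metric: `Ginv λ α = G^{λ̄α}`, so that `∑ λ, G_{βλ̄} G^{λ̄α} = δ_β^α`. -/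
def Ginv (l α : Fin n) : Pt n → ℂ := fun p => (F.Levi p)⁻¹ l α

/-- The Chern–Finsler nonlinear connection coefficients `Γ^α_{;μ} = G^{λ̄α} G_{λ̄;μ}`. -/
def Γ0 (α μ : Fin n) : Pt n → ℂ := fun p => ∑ l, F.Ginv l α p * dz μ (dvb l F.Gc) p

/-- The horizontal derivative `δ_μ = ∂_μ - Γ^α_{;μ} ∂̇_α`. -/
def δh (μ : Fin n) (f : Pt n → ℂ) : Pt n → ℂ := fun p =>
  dz μ f p - ∑ α, F.Γ0 α μ p * dv α f p

/-- The conjugate horizontal derivative `δ_ν̄`. -/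
def δhb (ν : Fin n) (f : Pt n → ℂ) : Pt n → ℂ := fun p =>
  dzb ν f p - ∑ α, conj (F.Γ0 α ν p) * dvb α f p

/-- The horizontal Chern–Finsler connection coefficients `Γ^α_{β;μ} = G^{λ̄α} δ_μ(G_{βλ̄})`. -/
def Γh (α β μ : Fin n) : Pt n → ℂ := fun p => ∑ l, F.Ginv l α p * F.δh μ (F.Gm β l) p

/-- `G_{αβ̄σ}`. -/
def Gm3 (α β σ : Fin n) : Pt n → ℂ := dv σ (F.Gm α β)

/-- `G_{αβ̄τ̄}`. -/
def Gm3b (α β τ : Fin n) : Pt n → ℂ := dvb τ (F.Gm α β)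

/-- The holomorphic sectional curvature tensor `Ω_{αβ̄;μν̄}` of the
Chern–Finsler connection `D`. -/
def Om (α β μ ν : Fin n) : Pt n → ℂ := fun p =>
  -F.δhb ν (F.δh μ (F.Gm α β)) p
  + (∑ l, ∑ k, F.δh μ (F.Gm α l) p * F.Ginv l k p * F.δhb ν (F.Gm k β) p)
  - ∑ σ, F.Gm3 α β σ p * F.δhb ν (F.Γ0 σ μ) p

/-- The canonical connection coefficients `L^α_{βμ}`. -/
def Lh (α β μ : Fin n) : Pt n → ℂ := fun p =>
  (1 / 2 : ℂ) * ∑ l, F.Ginv l α p * (F.δh μ (F.Gm β l) p + F.δh β (F.Gm μ l) p)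

/-- The canonical connection coefficients `L^α_{βμ̄}`. -/
def Lhb (α β μ : Fin n) : Pt n → ℂ := fun p =>
  (1 / 2 : ℂ) * ∑ l, F.Ginv l α p * (F.δhb μ (F.Gm β l) p - F.δhb l (F.Gm β μ) p)

/-- The holomorphic sectional curvature tensor `R_{αβ̄μν̄}` of Munteanu's
canonical connection `∇`, i.e.
`⟨∇_{δ_μ}∇_{δ_ν̄}δ_α - ∇_{δ_ν̄}∇_{δ_μ}δ_α - ∇_{[δ_μ,δ_ν̄]}δ_α, δ_β⟩`
expressed in local coordinates. -/
def Rc (α β μ ν : Fin n) : Pt n → ℂ := fun p =>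
  (∑ g, (F.δh μ (F.Lhb g α ν) p - F.δhb ν (F.Lh g α μ) p
      + ∑ σ, (F.Lhb σ α ν p * F.Lh g σ μ p - F.Lh σ α μ p * F.Lhb g σ ν p)) * F.Gm g β p)
  - ∑ σ, F.Gm3 α β σ p * F.δhb ν (F.Γ0 σ μ) p

/-- The holomorphic sectional curvature tensor `K_{αβ̄μν̄}` of the extension `∇ᶜ`
of the canonical connection to the complexified tangent bundle, in local
coordinates (the extra term, compared with `R_{αβ̄μν̄}`, comes from the mixed
connection coefficients `L^α_{β̄μ} = L^α_{μβ̄}` and their conjugates). -/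
def Kc (α β μ ν : Fin n) : Pt n → ℂ := fun p =>
  (∑ g, (F.δh μ (F.Lhb g α ν) p - F.δhb ν (F.Lh g α μ) p
      + ∑ σ, (F.Lhb σ α ν p * F.Lh g σ μ p
          + conj (F.Lhb σ ν α p) * F.Lhb g μ σ p
          - F.Lh σ α μ p * F.Lhb g σ ν p)) * F.Gm g β p)
  - ∑ σ, F.Gm3 α β σ p * F.δhb ν (F.Γ0 σ μ) p

/-- The horizontal torsion tensor `S^γ_{αβ} = ½(Γ^γ_{α;β} - Γ^γ_{β;α})`. -/
def Sh (γ α β : Fin n) : Pt n → ℂ := fun p => (1 / 2 : ℂ) * (F.Γh γ α β p - F.Γh γ β α p)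

/-- `S_α = ∑_γ S^γ_{αγ}`. -/
def S1 (α : Fin n) : Pt n → ℂ := fun p => ∑ γ, F.Sh γ α γ p

/-- `S_{αγλ̄} = ½(δ_γ(G_{αλ̄}) - δ_α(G_{γλ̄}))`. -/
def Shl (α γ l : Fin n) : Pt n → ℂ := fun p =>
  (1 / 2 : ℂ) * (F.δh γ (F.Gm α l) p - F.δh α (F.Gm γ l) p)

/-- The Ricci curvature `Ω_{μν̄} = G^{β̄α} Ω_{αβ̄;μν̄}` of the Chern–Finsler
connection, so that `Ric_D = √-1 Ω_{μν̄} dz^μ ∧ dz̄^ν`. -/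
def ricD (μ ν : Fin n) : Pt n → ℂ := fun p => ∑ α, ∑ β, F.Ginv β α p * F.Om α β μ ν p

/-- The Ricci curvature `R_{μν̄} = G^{β̄α} R_{αβ̄μν̄}` of the canonical connection. -/
def ricR (μ ν : Fin n) : Pt n → ℂ := fun p => ∑ α, ∑ β, F.Ginv β α p * F.Rc α β μ ν p

/-- The Ricci curvature `K_{μν̄} = G^{β̄α} K_{αβ̄μν̄}` of the connection `∇ᶜ`. -/
def ricK (μ ν : Fin n) : Pt n → ℂ := fun p => ∑ α, ∑ β, F.Ginv β α p * F.Kc α β μ ν p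

/-- The scalar curvature `s_D = G^{β̄α} G^{ν̄μ} Ω_{αβ̄;μν̄}`. -/
def sD : Pt n → ℂ := fun p => ∑ μ, ∑ ν, F.Ginv ν μ p * F.ricD μ ν p

/-- The scalar curvature `s_∇ = G^{β̄α} G^{ν̄μ} R_{αβ̄μν̄}`. -/
def sR : Pt n → ℂ := fun p => ∑ μ, ∑ ν, F.Ginv ν μ p * F.ricR μ ν p

/-- The scalar curvature `s_{∇ᶜ} = G^{β̄α} G^{ν̄μ} K_{αβ̄μν̄}`. -/
def sK : Pt n → ℂ := fun p => ∑ μ, ∑ ν, F.Ginv ν μ p * F.ricK μ ν p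

/-- `(𝔖 ∘ 𝔖̄)_{μν̄} = G^{β̄α} G^{λ̄γ} S_{αγν̄} conj (S_{βλμ̄})`. -/
def SS (μ ν : Fin n) : Pt n → ℂ := fun p =>
  ∑ α, ∑ β, ∑ γ, ∑ l,
    F.Ginv β α p * F.Ginv l γ p * F.Shl α γ ν p * conj (F.Shl β l μ p)

/-- `⟨𝔖, 𝔖⟩ = G^{ν̄μ} (𝔖 ∘ 𝔖̄)_{μν̄}`. -/
def SnormSq : Pt n → ℂ := fun p => ∑ μ, ∑ ν, F.Ginv ν μ p * F.SS μ ν p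

/-- `F` is a Kähler-Finsler metric: `Γ^α_{β;μ} = Γ^α_{μ;β}`. -/
def IsKaehler : Prop := ∀ (α β μ : Fin n), ∀ p ∈ slit n, F.Γh α β μ p = F.Γh α μ β p

/-- `F` is a weakly Kähler-Finsler metric: `G_α (Γ^α_{β;μ} - Γ^α_{μ;β}) v^β = 0`. -/
def IsWeaklyKaehler : Prop := ∀ (μ : Fin n), ∀ p ∈ slit n,
  (∑ α, ∑ β, dv α F.Gc p * (F.Γh α β μ p - F.Γh α μ β p) * p.2 β) = 0

/-- The horizontal curvature `Ω̂^α_{β;μν̄} = -δ_ν̄(Γ^α_{β;μ})` of the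
complex Rund connection. -/
def RundCurv (α β μ ν : Fin n) : Pt n → ℂ := fun p => -F.δhb ν (F.Γh α β μ) p

/-- `F` is Rund Kähler-Finsler-like: `Ω̂^α_{β;μν̄} = Ω̂^α_{μ;βν̄}`. -/
def IsRundKL : Prop := ∀ (α β μ ν : Fin n), ∀ p ∈ slit n,
  F.RundCurv α β μ ν p = F.RundCurv α μ β ν p

/-- The holomorphic flag curvature `K_D(H)` of the Chern–Finsler connection
along the horizontal vector `H = H^α δ_α`. -/
def flagD (H : Fin n → ℂ) : Pt n → ℂ := fun p =>
  (∑ α, ∑ β, ∑ μ, ∑ ν, F.Om α β μ ν p * H α * conj (H β) * H μ * conj (H ν)) /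
    (∑ α, ∑ β, F.Gm α β p * H α * conj (H β)) ^ 2

/-- The holomorphic flag curvature `K_∇(H)` of the canonical connection. -/
def flagR (H : Fin n → ℂ) : Pt n → ℂ := fun p =>
  (∑ α, ∑ β, ∑ μ, ∑ ν, F.Rc α β μ ν p * H α * conj (H β) * H μ * conj (H ν)) /
    (∑ α, ∑ β, F.Gm α β p * H α * conj (H β)) ^ 2

/-- The holomorphic sectional curvature `K_D(v)` along `v`. -/
def holD : Pt n → ℂ := fun p =>
  (∑ α, ∑ β, ∑ μ, ∑ ν, F.Om α β μ ν p * p.2 α * conj (p.2 β) * p.2 μ * conj (p.2 ν)) /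
    (F.Gc p) ^ 2

/-- The holomorphic sectional curvature `K_∇(v)` along `v`. -/
def holR : Pt n → ℂ := fun p =>
  (∑ α, ∑ β, ∑ μ, ∑ ν, F.Rc α β μ ν p * p.2 α * conj (p.2 β) * p.2 μ * conj (p.2 ν)) /
    (F.Gc p) ^ 2

/-- The operator `∂_H` on horizontal `(p,q)`-forms. -/
def pH {p q : ℕ} (φ : HForm n p q) : HForm n (p + 1) q := fun I J x =>
  ∑ j : Fin (p + 1), (-1 : ℂ) ^ (j : ℕ) * F.δh (I j) (fun y => φ (I ∘ j.succAbove) J y) x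

/-- The operator `∂̄_H` on horizontal `(p,q)`-forms. -/
def pHbar {p q : ℕ} (φ : HForm n p q) : HForm n p (q + 1) := fun I J x =>
  (-1 : ℂ) ^ p *
    ∑ j : Fin (q + 1), (-1 : ℂ) ^ (j : ℕ) * F.δhb (J j) (fun y => φ I (J ∘ j.succAbove) y) x

/-- The horizontal fundamental form `ω_H = √-1 G_{αβ̄} dz^α ∧ dz̄^β`. -/
def omH : HForm n 1 1 := fun I J x => Complex.I * F.Gm (I 0) (J 0) x

/-- The wedge power `ω_H^k` (coefficient array in the `1/(k!k!)` convention). -/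
def omPow (k : ℕ) : HForm n k k := fun I J x =>
  Complex.I ^ k * (-1 : ℂ) ^ (k * (k - 1) / 2) * (k.factorial : ℂ) *
    ∑ σ : Equiv.Perm (Fin k), permSign σ * ∏ j, F.Gm (I j) (J (σ j)) x

/-- The pointwise Hermitian inner product `⟨·,·⟩_{PM̃}` on horizontal
`(p,q)`-forms induced by `(G_{αβ̄})`. -/
def hinner {p q : ℕ} (φ ψ : HForm n p q) : Pt n → ℂ := fun x =>
  (((p.factorial * q.factorial : ℕ) : ℂ))⁻¹ *
    ∑ I : Fin p → Fin n, ∑ J : Fin q → Fin n, ∑ I' : Fin p → Fin n, ∑ J' : Fin q → Fin n,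
      φ I J x * (∏ i, F.Ginv (I' i) (I i) x) * (∏ j, F.Ginv (J' j) (J j) x) *
        conj (ψ I' J' x)

/-- The `(0,1)`-form `∂_H^* ω_H = 2√-1 S_ᾱ dz̄^α`. -/
def pstarOmH : HForm n 0 1 := fun _ J x => 2 * Complex.I * conj (F.S1 (J 0) x)

/-- The `(1,0)`-form `∂̄_H^* ω_H = -2√-1 S_α dz^α`. -/
def pbarstarOmH : HForm n 1 0 := fun I _ x => -(2 * Complex.I) * F.S1 (I 0) x

/-- The horizontal `(1,0)`-form `𝒮 = S_α dz^α`. -/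
def SForm : HForm n 1 0 := fun I _ x => F.S1 (I 0) x

/-- `F` is a balanced complex Finsler metric: `d_H^* ω_H = 0`, i.e. both
`∂_H^* ω_H = 0` and `∂̄_H^* ω_H = 0`. -/
def IsBalanced : Prop :=
  (∀ (I : Fin 0 → Fin n) (J : Fin 1 → Fin n), ∀ x ∈ slit n, F.pstarOmH I J x = 0) ∧
  (∀ (I : Fin 1 → Fin n) (J : Fin 0 → Fin n), ∀ x ∈ slit n, F.pbarstarOmH I J x = 0)

end SPCF

/-- The invariant integral `∫_{PM̃} · dμ_{PM̃}` against the volume form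
`dμ_{PM̃} = ω_V^{n-1}/(n-1)! ∧ ω_H^n/n!` of a **compact** strongly pseudoconvex
complex Finsler manifold, applied to `0`-homogeneous functions on `M̃`
(i.e. functions on `PM̃`).  The existence of this structure encodes the
compactness of the base manifold `M`. -/
structure PTMIntegral {n : ℕ} (F : SPCF n) where
  integ : (Pt n → ℂ) → ℂ
  integ_add : ∀ f g : Pt n → ℂ, integ (fun x => f x + g x) = integ f + integ g
  integ_smul : ∀ (c : ℂ) (f : Pt n → ℂ), integ (fun x => c * f x) = c * integ f
  integ_conj : ∀ f : Pt n → ℂ, integ (fun x => conj (f x)) = conj (integ f)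
  integ_nonneg : ∀ f : Pt n → ℂ, (∀ x ∈ slit n, 0 ≤ (f x).re ∧ (f x).im = 0) →
    0 ≤ (integ f).re ∧ (integ f).im = 0
  integ_vanish : ∀ f : Pt n → ℂ, ContinuousOn f (slit n) →
    (∀ x ∈ slit n, 0 ≤ (f x).re ∧ (f x).im = 0) → integ f = 0 →
      ∀ x ∈ slit n, f x = 0

/-- `F̃ = e^{ρ/2} F` is a conformal change of `F` with smooth real factor `ρ`
on the base manifold, i.e. `G̃ = e^ρ G`. -/
def IsConformal (F Ft : SPCF n) (ρ : (Fin n → ℂ) → ℝ) : Prop :=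
  ContDiff ℝ (⊤ : ℕ∞) ρ ∧ ∀ p : Pt n, Ft.G p = Real.exp (ρ p.1) * F.G p

end CFG

open ComplexConjugate CFG

namespace CFGAux

open scoped ComplexOrder

variable {n : ℕ}

lemma isOpen_slit : IsOpen (slit n) := by
  have h : slit n = Prod.snd ⁻¹' {(0 : Fin n → ℂ)}ᶜ := rfl
  rw [h]
  exact isOpen_compl_singleton.preimage continuous_snd

lemma fderiv_conj (f : Pt n → ℂ) (p w : Pt n) :
    fderiv ℝ (fun x => conj (f x)) p w = conj (fderiv ℝ f p w) := by
  have h : (fun x => conj (f x)) = ⇑Complex.conjCLE ∘ f := rfl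
  rw [h, ContinuousLinearEquiv.comp_fderiv]
  rfl

lemma conj_dz (μ : Fin n) (f : Pt n → ℂ) (p : Pt n) :
    conj (dz μ f p) = dzb μ (fun x => conj (f x)) p := by
  simp only [dz, dzb, fderiv_conj, map_mul, map_sub, map_add, map_one, map_div₀, map_ofNat,
    Complex.conj_I]
  ring

lemma conj_dzb (μ : Fin n) (f : Pt n → ℂ) (p : Pt n) :
    conj (dzb μ f p) = dz μ (fun x => conj (f x)) p := by
  simp only [dz, dzb, fderiv_conj, map_mul, map_sub, map_add, map_one, map_div₀, map_ofNat,
    Complex.conj_I]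
  ring

lemma conj_dv (μ : Fin n) (f : Pt n → ℂ) (p : Pt n) :
    conj (dv μ f p) = dvb μ (fun x => conj (f x)) p := by
  simp only [dv, dvb, fderiv_conj, map_mul, map_sub, map_add, map_one, map_div₀, map_ofNat,
    Complex.conj_I]
  ring

lemma conj_dvb (μ : Fin n) (f : Pt n → ℂ) (p : Pt n) :
    conj (dvb μ f p) = dv μ (fun x => conj (f x)) p := by
  simp only [dv, dvb, fderiv_conj, map_mul, map_sub, map_add, map_one, map_div₀, map_ofNat,
    Complex.conj_I]
  ring

lemma conj_δh (F : SPCF n) (μ : Fin n) (f : Pt n → ℂ) (p : Pt n) :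
    conj (F.δh μ f p) = F.δhb μ (fun x => conj (f x)) p := by
  simp only [SPCF.δh, SPCF.δhb, map_sub, map_sum, map_mul, conj_dz, conj_dv]

lemma conj_δhb (F : SPCF n) (μ : Fin n) (f : Pt n → ℂ) (p : Pt n) :
    conj (F.δhb μ f p) = F.δh μ (fun x => conj (f x)) p := by
  simp only [SPCF.δh, SPCF.δhb, map_sub, map_sum, map_mul, conj_dzb, conj_dvb,
    Complex.conj_conj]

lemma dz_congr (μ : Fin n) {f g : Pt n → ℂ} {p : Pt n} (h : f =ᶠ[nhds p] g) :
    dz μ f p = dz μ g p := by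
  simp only [dz, h.fderiv_eq]

lemma dv_congr (μ : Fin n) {f g : Pt n → ℂ} {p : Pt n} (h : f =ᶠ[nhds p] g) :
    dv μ f p = dv μ g p := by
  simp only [dv, h.fderiv_eq]

lemma dzb_congr (μ : Fin n) {f g : Pt n → ℂ} {p : Pt n} (h : f =ᶠ[nhds p] g) :
    dzb μ f p = dzb μ g p := by
  simp only [dzb, h.fderiv_eq]

lemma dvb_congr (μ : Fin n) {f g : Pt n → ℂ} {p : Pt n} (h : f =ᶠ[nhds p] g) :
    dvb μ f p = dvb μ g p := by
  simp only [dvb, h.fderiv_eq]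

lemma δh_congr (F : SPCF n) (μ : Fin n) {f g : Pt n → ℂ} {p : Pt n} (h : f =ᶠ[nhds p] g) :
    F.δh μ f p = F.δh μ g p := by
  simp only [SPCF.δh, dz_congr μ h]
  congr 1
  exact Finset.sum_congr rfl fun a _ => by rw [dv_congr a h]

lemma δhb_congr (F : SPCF n) (μ : Fin n) {f g : Pt n → ℂ} {p : Pt n} (h : f =ᶠ[nhds p] g) :
    F.δhb μ f p = F.δhb μ g p := by
  simp only [SPCF.δhb, dzb_congr μ h]
  congr 1
  exact Finset.sum_congr rfl fun a _ => by rw [dvb_congr a h]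

lemma sum_single_support (A : Fin n → Fin n → ℂ) (α : Fin n) (a : ℂ) :
    (∑ γ, ∑ δ, A γ δ * (if γ = α then a else 0) * conj (if δ = α then a else 0))
      = A α α * a * conj a := by
  rw [Fintype.sum_eq_single α]
  · rw [Fintype.sum_eq_single α]
    · simp
    · intro x hx; simp [hx]
  · intro x hx
    apply Finset.sum_eq_zero
    intro y _
    simp [hx]

lemma sum_pair_support (A : Fin n → Fin n → ℂ) {α β : Fin n} (hab : α ≠ β) (a b : ℂ) :
    (∑ γ, ∑ δ, A γ δ * (if γ = α then a else if γ = β then b else 0)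
        * conj (if δ = α then a else if δ = β then b else 0))
      = A α α * a * conj a + A α β * a * conj b + A β α * b * conj a + A β β * b * conj b := by
  have inner : ∀ γ c, (∑ δ, A γ δ * c * conj (if δ = α then a else if δ = β then b else 0))
      = A γ α * c * conj a + A γ β * c * conj b := by
    intro γ c
    have h2 : ∀ x, x ≠ α ∧ x ≠ β →
        A γ x * c * conj (if x = α then a else if x = β then b else 0) = 0 := by
      rintro x ⟨hxa, hxb⟩
      rw [if_neg hxa, if_neg hxb, map_zero, mul_zero]
    rw [Fintype.sum_eq_add α β hab h2, if_pos rfl, if_neg hab.symm, if_pos rfl]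
  have h2' : ∀ x, x ≠ α ∧ x ≠ β →
      (∑ δ, A x δ * (if x = α then a else if x = β then b else 0)
        * conj (if δ = α then a else if δ = β then b else 0)) = 0 := by
    rintro x ⟨hxa, hxb⟩
    rw [inner, if_neg hxa, if_neg hxb]
    ring
  rw [Fintype.sum_eq_add α β hab h2', inner, inner, if_pos rfl, if_neg hab.symm, if_pos rfl]
  ring

lemma Gm_conj (F : SPCF n) {p : Pt n} (hp : p ∈ slit n) (α β : Fin n) :
    conj (F.Gm α β p) = F.Gm β α p := by
  have hQ : ∀ w : Fin n → ℂ, w ≠ 0 →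
      (∑ γ, ∑ δ, F.Gm γ δ p * w γ * conj (w δ)).im = 0 :=
    fun w hw => (F.posdef p hp w hw).2
  have hdiag : ∀ γ : Fin n, (F.Gm γ γ p).im = 0 := by
    intro γ
    have h := hQ (fun δ => if δ = γ then 1 else 0) (by
      intro h0
      have := congrFun h0 γ
      simp at this)
    rwa [sum_single_support (fun γ' δ => F.Gm γ' δ p) γ 1, mul_one, map_one, mul_one] at h
  rcases eq_or_ne α β with rfl | hab
  · exact Complex.conj_eq_iff_im.mpr (hdiag α)
  · have h1 := hQ (fun δ => if δ = α then (1:ℂ) else if δ = β then 1 else 0) (by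
      intro h0
      have := congrFun h0 α
      simp at this)
    have h2 := hQ (fun δ => if δ = α then (1:ℂ) else if δ = β then Complex.I else 0) (by
      intro h0
      have := congrFun h0 α
      simp at this)
    rw [sum_pair_support (fun γ δ => F.Gm γ δ p) hab 1 1] at h1
    rw [sum_pair_support (fun γ δ => F.Gm γ δ p) hab 1 Complex.I] at h2
    have ea := hdiag α
    have eb := hdiag β
    simp only [map_one, mul_one, one_mul, Complex.conj_I, Complex.add_im, Complex.mul_im,
      Complex.mul_re, Complex.I_re, Complex.I_im, Complex.neg_im, Complex.neg_re,
      Complex.conj_re, Complex.conj_im] at h1 h2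
    apply Complex.ext <;>
      simp only [Complex.conj_re, Complex.conj_im] <;> nlinarith [h1, h2, ea, eb]

lemma levi_posDef (F : SPCF n) {p : Pt n} (hp : p ∈ slit n) : (F.Levi p).PosDef := by
  refine Matrix.PosDef.of_dotProduct_mulVec_pos ?_ ?_
  · ext i j
    exact Gm_conj F hp j i
  · intro x hx
    have hw : (fun i => conj (x i)) ≠ 0 := by
      intro h0
      apply hx
      funext i
      have := congrFun h0 i
      simpa using this
    have h := F.posdef p hp (fun i => conj (x i)) hw
    have key : dotProduct (star x) ((F.Levi p).mulVec x)
        = ∑ γ, ∑ δ, F.Gm γ δ p * conj (x γ) * conj (conj (x δ)) := by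
      simp only [dotProduct, Matrix.mulVec, Pi.star_apply, Complex.conj_conj,
        Finset.mul_sum, starRingEnd_apply]
      apply Finset.sum_congr rfl
      intro γ _
      apply Finset.sum_congr rfl
      intro δ _
      simp only [SPCF.Levi, Matrix.of_apply, star_star]
      ring
    rw [Complex.lt_def]
    constructor
    · rw [key]
      simpa [SPCF.Gm] using h.1
    · rw [key]
      simpa [SPCF.Gm] using h.2.symm

lemma Ginv_conj (F : SPCF n) {p : Pt n} (hp : p ∈ slit n) (l γ : Fin n) :
    conj (F.Ginv l γ p) = F.Ginv γ l p :=
  ((levi_posDef F hp).isHermitian.inv (A := F.Levi p)).apply γ l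

lemma Ginv_mul (F : SPCF n) {p : Pt n} (hp : p ∈ slit n) (l β : Fin n) :
    ∑ g, F.Ginv l g p * F.Gm g β p = if l = β then 1 else 0 := by
  have h := Matrix.nonsing_inv_mul (F.Levi p)
    ((Matrix.isUnit_iff_isUnit_det _).1 (levi_posDef F hp).isUnit)
  have h2 := congrFun (congrFun h l) β
  simpa [Matrix.mul_apply, Matrix.one_apply, SPCF.Ginv, SPCF.Levi] using h2

lemma conj_δhb_Gm (F : SPCF n) {p : Pt n} (hp : p ∈ slit n) (i a b : Fin n) :
    conj (F.δhb i (F.Gm a b) p) = F.δh i (F.Gm b a) p := by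
  rw [conj_δhb]
  apply δh_congr
  filter_upwards [isOpen_slit.mem_nhds hp] with q hq
  exact Gm_conj F hq a b

lemma conj_δh_Gm (F : SPCF n) {p : Pt n} (hp : p ∈ slit n) (i a b : Fin n) :
    conj (F.δh i (F.Gm a b) p) = F.δhb i (F.Gm b a) p := by
  rw [conj_δh]
  apply δhb_congr
  filter_upwards [isOpen_slit.mem_nhds hp] with q hq
  exact Gm_conj F hq a b

lemma conj_Lhb (F : SPCF n) {p : Pt n} (hp : p ∈ slit n) (σ ν α : Fin n) :
    conj (F.Lhb σ ν α p) =
      (1 / 2 : ℂ) * ∑ l, F.Ginv σ l p *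
        (F.δh α (F.Gm l ν) p - F.δh l (F.Gm α ν) p) := by
  simp only [SPCF.Lhb, map_mul, map_sum, map_sub, map_div₀, map_one, map_ofNat]
  congr 1
  apply Finset.sum_congr rfl
  intro l _
  rw [Ginv_conj F hp, conj_δhb_Gm F hp, conj_δhb_Gm F hp]

lemma sum6 {M : Type*} [AddCommMonoid M] (f : Fin n → Fin n → Fin n → Fin n → Fin n → Fin n → M) :
    (∑ α, ∑ β, ∑ μ, ∑ ν, ∑ l, ∑ γ, f α β μ ν l γ)
      = ∑ l, ∑ γ, ∑ α, ∑ ν, ∑ μ, ∑ β, f α β μ ν l γ := by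
  calc (∑ α, ∑ β, ∑ μ, ∑ ν, ∑ l, ∑ γ, f α β μ ν l γ)
      = ∑ α, ∑ β, ∑ μ, ∑ l, ∑ ν, ∑ γ, f α β μ ν l γ :=
        Finset.sum_congr rfl fun _ _ => Finset.sum_congr rfl fun _ _ =>
          Finset.sum_congr rfl fun _ _ => Finset.sum_comm
    _ = ∑ α, ∑ β, ∑ l, ∑ μ, ∑ ν, ∑ γ, f α β μ ν l γ :=
        Finset.sum_congr rfl fun _ _ => Finset.sum_congr rfl fun _ _ => Finset.sum_comm
    _ = ∑ α, ∑ l, ∑ β, ∑ μ, ∑ ν, ∑ γ, f α β μ ν l γ :=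
        Finset.sum_congr rfl fun _ _ => Finset.sum_comm
    _ = ∑ l, ∑ α, ∑ β, ∑ μ, ∑ ν, ∑ γ, f α β μ ν l γ := Finset.sum_comm
    _ = ∑ l, ∑ α, ∑ β, ∑ μ, ∑ γ, ∑ ν, f α β μ ν l γ :=
        Finset.sum_congr rfl fun _ _ => Finset.sum_congr rfl fun _ _ =>
          Finset.sum_congr rfl fun _ _ => Finset.sum_congr rfl fun _ _ => Finset.sum_comm
    _ = ∑ l, ∑ α, ∑ β, ∑ γ, ∑ μ, ∑ ν, f α β μ ν l γ :=
        Finset.sum_congr rfl fun _ _ => Finset.sum_congr rfl fun _ _ =>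
          Finset.sum_congr rfl fun _ _ => Finset.sum_comm
    _ = ∑ l, ∑ α, ∑ γ, ∑ β, ∑ μ, ∑ ν, f α β μ ν l γ :=
        Finset.sum_congr rfl fun _ _ => Finset.sum_congr rfl fun _ _ => Finset.sum_comm
    _ = ∑ l, ∑ γ, ∑ α, ∑ β, ∑ μ, ∑ ν, f α β μ ν l γ :=
        Finset.sum_congr rfl fun _ _ => Finset.sum_comm
    _ = ∑ l, ∑ γ, ∑ α, ∑ μ, ∑ β, ∑ ν, f α β μ ν l γ :=
        Finset.sum_congr rfl fun _ _ => Finset.sum_congr rfl fun _ _ =>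
          Finset.sum_congr rfl fun _ _ => Finset.sum_comm
    _ = ∑ l, ∑ γ, ∑ α, ∑ μ, ∑ ν, ∑ β, f α β μ ν l γ :=
        Finset.sum_congr rfl fun _ _ => Finset.sum_congr rfl fun _ _ =>
          Finset.sum_congr rfl fun _ _ => Finset.sum_congr rfl fun _ _ => Finset.sum_comm
    _ = ∑ l, ∑ γ, ∑ α, ∑ ν, ∑ μ, ∑ β, f α β μ ν l γ :=
        Finset.sum_congr rfl fun _ _ => Finset.sum_congr rfl fun _ _ =>
          Finset.sum_congr rfl fun _ _ => Finset.sum_comm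

lemma Lhb_Gm_sum (F : SPCF n) {p : Pt n} (hp : p ∈ slit n) (μ σ β : Fin n) :
    ∑ g, F.Lhb g μ σ p * F.Gm g β p
      = (1 / 2 : ℂ) * (F.δhb σ (F.Gm μ β) p - F.δhb β (F.Gm μ σ) p) := by
  simp only [SPCF.Lhb]
  calc (∑ g, ((1 / 2 : ℂ) *
          ∑ l, F.Ginv l g p * (F.δhb σ (F.Gm μ l) p - F.δhb l (F.Gm μ σ) p)) * F.Gm g β p)
      = ∑ l, (1 / 2 : ℂ) * (F.δhb σ (F.Gm μ l) p - F.δhb l (F.Gm μ σ) p)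
          * ∑ g, F.Ginv l g p * F.Gm g β p := by
        simp only [Finset.mul_sum, Finset.sum_mul]
        rw [Finset.sum_comm]
        exact Finset.sum_congr rfl fun l _ => Finset.sum_congr rfl fun g _ => by ring
    _ = ∑ l, (1 / 2 : ℂ) * (F.δhb σ (F.Gm μ l) p - F.δhb l (F.Gm μ σ) p)
          * (if l = β then 1 else 0) :=
        Finset.sum_congr rfl fun l _ => by rw [Ginv_mul F hp]
    _ = (1 / 2 : ℂ) * (F.δhb σ (F.Gm μ β) p - F.δhb β (F.Gm μ σ) p) := by
        simp [mul_ite, mul_one, mul_zero, Finset.sum_ite_eq']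

lemma quadsum (A : Fin n → Fin n → Fin n → ℂ) (B : Fin n → Fin n → ℂ)
    (C : Fin n → Fin n → Fin n → ℂ) (H K : Fin n → ℂ) (c : ℂ) :
    (∑ α, ∑ β, ∑ μ, ∑ ν, (c * ∑ l, ∑ γ, A μ β l * B l γ * C α ν γ)
        * H α * conj (H β) * K μ * conj (K ν))
      = c * ∑ l, ∑ γ, (∑ μ, ∑ β, A μ β l * K μ * conj (H β)) * B l γ
          * (∑ α, ∑ ν, C α ν γ * H α * conj (K ν)) := by
  simp only [Finset.sum_mul, Finset.mul_sum]
  rw [sum6]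
  exact Finset.sum_congr rfl fun _ _ => Finset.sum_congr rfl fun _ _ =>
    Finset.sum_congr rfl fun _ _ => Finset.sum_congr rfl fun _ _ =>
    Finset.sum_congr rfl fun _ _ => Finset.sum_congr rfl fun _ _ => by ring

lemma key_diff (F : SPCF n) (α β μ ν : Fin n) {p : Pt n} (hp : p ∈ slit n) :
    F.Kc α β μ ν p - F.Rc α β μ ν p
      = (-(1 / 4 : ℂ)) * ∑ l, ∑ γ, (F.δhb β (F.Gm μ l) p - F.δhb l (F.Gm μ β) p)
          * F.Ginv l γ p * (F.δh α (F.Gm γ ν) p - F.δh γ (F.Gm α ν) p) := by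
  have hKR : F.Kc α β μ ν p - F.Rc α β μ ν p
      = ∑ g, (∑ σ, conj (F.Lhb σ ν α p) * F.Lhb g μ σ p) * F.Gm g β p := by
    simp only [SPCF.Kc, SPCF.Rc, sub_sub_sub_cancel_right, ← Finset.sum_sub_distrib, ← sub_mul]
    refine Finset.sum_congr rfl fun g _ => ?_
    rw [add_sub_add_left_eq_sub, ← Finset.sum_sub_distrib]
    congr 1
    refine Finset.sum_congr rfl fun σ _ => ?_
    ring
  calc F.Kc α β μ ν p - F.Rc α β μ ν p
      = ∑ g, (∑ σ, conj (F.Lhb σ ν α p) * F.Lhb g μ σ p) * F.Gm g β p := hKR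
    _ = ∑ σ, conj (F.Lhb σ ν α p) * ∑ g, F.Lhb g μ σ p * F.Gm g β p := by
        simp only [Finset.sum_mul, Finset.mul_sum]
        rw [Finset.sum_comm]
        exact Finset.sum_congr rfl fun σ _ => Finset.sum_congr rfl fun g _ => by ring
    _ = ∑ σ, ((1 / 2 : ℂ) * ∑ γ, F.Ginv σ γ p
            * (F.δh α (F.Gm γ ν) p - F.δh γ (F.Gm α ν) p))
          * ((1 / 2 : ℂ) * (F.δhb σ (F.Gm μ β) p - F.δhb β (F.Gm μ σ) p)) :=
        Finset.sum_congr rfl fun σ _ => by rw [conj_Lhb F hp, Lhb_Gm_sum F hp]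
    _ = (-(1 / 4 : ℂ)) * ∑ l, ∑ γ, (F.δhb β (F.Gm μ l) p - F.δhb l (F.Gm μ β) p)
          * F.Ginv l γ p * (F.δh α (F.Gm γ ν) p - F.δh γ (F.Gm α ν) p) := by
        simp only [Finset.mul_sum, Finset.sum_mul, neg_mul, ← Finset.sum_neg_distrib]
        exact Finset.sum_congr rfl fun l _ => Finset.sum_congr rfl fun γ _ => by ring

end CFGAux

/-- Proposition 3.3.  The curvature tensors of `∇ᶜ` and `∇`
satisfy
`K_{αβ̄μν̄} = R_{αβ̄μν̄} - ¼ [δ_β̄(G_{μλ̄}) - δ_λ̄(G_{μβ̄})] G^{λ̄γ} [δ_α(G_{γν̄}) - δ_γ(G_{αν̄})]`,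
and consequently `(K_{αβ̄μν̄} - R_{αβ̄μν̄}) H^α H̄^β K^μ K̄^ν ≤ 0` (a real,
nonpositive number) for all horizontal vectors `H`, `K`. -/
theorem statement3 {n : ℕ} (hn : 2 ≤ n) (F : SPCF n) :
    (∀ (α β μ ν : Fin n), ∀ p ∈ slit n,
      F.Kc α β μ ν p =
        F.Rc α β μ ν p
          - (1 / 4 : ℂ) * (∑ l, ∑ γ, (F.δhb β (F.Gm μ l) p - F.δhb l (F.Gm μ β) p)
              * F.Ginv l γ p * (F.δh α (F.Gm γ ν) p - F.δh γ (F.Gm α ν) p))) ∧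
    (∀ p ∈ slit n, ∀ H K : Fin n → ℂ,
      (∑ α, ∑ β, ∑ μ, ∑ ν, (F.Kc α β μ ν p - F.Rc α β μ ν p)
          * H α * conj (H β) * K μ * conj (K ν)).re ≤ 0 ∧
      (∑ α, ∑ β, ∑ μ, ∑ ν, (F.Kc α β μ ν p - F.Rc α β μ ν p)
          * H α * conj (H β) * K μ * conj (K ν)).im = 0) := by
  open CFGAux in
  open scoped ComplexOrder in
  refine ⟨fun α β μ ν p hp => by linear_combination key_diff F α β μ ν hp, ?_⟩
  intro p hp H K
  set T : Fin n → ℂ := fun l => ∑ μ, ∑ β,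
    (F.δhb β (F.Gm μ l) p - F.δhb l (F.Gm μ β) p) * K μ * conj (H β) with hT
  have hTconj : ∀ γ, conj (T γ)
      = ∑ a, ∑ ν, (F.δh a (F.Gm γ ν) p - F.δh γ (F.Gm a ν) p) * H a * conj (K ν) := by
    intro γ
    calc conj (T γ)
        = ∑ μ, ∑ β, (F.δh β (F.Gm γ μ) p - F.δh γ (F.Gm β μ) p) * conj (K μ) * H β := by
          rw [hT]
          simp only [map_sum, map_mul, map_sub, Complex.conj_conj]
          refine Finset.sum_congr rfl fun μ _ => Finset.sum_congr rfl fun β _ => ?_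
          rw [conj_δhb_Gm F hp, conj_δhb_Gm F hp]
      _ = ∑ β, ∑ μ, (F.δh β (F.Gm γ μ) p - F.δh γ (F.Gm β μ) p) * conj (K μ) * H β :=
          Finset.sum_comm
      _ = ∑ a, ∑ ν, (F.δh a (F.Gm γ ν) p - F.δh γ (F.Gm a ν) p) * H a * conj (K ν) :=
          Finset.sum_congr rfl fun a _ => Finset.sum_congr rfl fun ν _ => by ring
  have hsum : (∑ α, ∑ β, ∑ μ, ∑ ν, (F.Kc α β μ ν p - F.Rc α β μ ν p)
        * H α * conj (H β) * K μ * conj (K ν))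
      = (-(1 / 4 : ℂ)) * ∑ l, ∑ γ, T l * F.Ginv l γ p * conj (T γ) := by
    have step1 : (∑ α, ∑ β, ∑ μ, ∑ ν, (F.Kc α β μ ν p - F.Rc α β μ ν p)
          * H α * conj (H β) * K μ * conj (K ν))
        = ∑ α, ∑ β, ∑ μ, ∑ ν, ((-(1 / 4 : ℂ)) * ∑ l, ∑ γ,
            (F.δhb β (F.Gm μ l) p - F.δhb l (F.Gm μ β) p) * F.Ginv l γ p
              * (F.δh α (F.Gm γ ν) p - F.δh γ (F.Gm α ν) p))
            * H α * conj (H β) * K μ * conj (K ν) :=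
      Finset.sum_congr rfl fun α _ => Finset.sum_congr rfl fun β _ =>
        Finset.sum_congr rfl fun μ _ => Finset.sum_congr rfl fun ν _ => by
          rw [key_diff F α β μ ν hp]
    rw [step1]
    rw [quadsum (fun μ β l => F.δhb β (F.Gm μ l) p - F.δhb l (F.Gm μ β) p)
      (fun l γ => F.Ginv l γ p)
      (fun α ν γ => F.δh α (F.Gm γ ν) p - F.δh γ (F.Gm α ν) p) H K (-(1 / 4 : ℂ))]
    refine congrArg _ ?_
    refine Finset.sum_congr rfl fun l _ => Finset.sum_congr rfl fun γ _ => ?_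
    rw [hTconj γ, hT]
  have hB : ((F.Levi p)⁻¹).PosSemidef := (levi_posDef F hp).inv.posSemidef
  have hZ := hB.dotProduct_mulVec_nonneg (fun i => conj (T i))
  have hZeq : dotProduct (star fun i => conj (T i))
      ((F.Levi p)⁻¹.mulVec fun i => conj (T i))
      = ∑ l, ∑ γ, T l * F.Ginv l γ p * conj (T γ) := by
    simp only [dotProduct, Matrix.mulVec, Pi.star_apply, starRingEnd_apply, star_star,
      Finset.mul_sum]
    refine Finset.sum_congr rfl fun l _ => Finset.sum_congr rfl fun γ _ => ?_
    simp only [SPCF.Ginv]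
    ring
  rw [hZeq] at hZ
  rw [Complex.le_def] at hZ
  obtain ⟨hre, him⟩ := hZ
  simp only [Complex.zero_re, Complex.zero_im] at hre him
  have hcast : (-(1 / 4 : ℂ)) = ((-(1 / 4 : ℝ) : ℝ) : ℂ) := by norm_num
  constructor
  · rw [hsum, hcast, Complex.re_ofReal_mul]
    nlinarith [hre]
  · rw [hsum, hcast, Complex.im_ofReal_mul, ← him, mul_zero]
end
end

section
/- Let (M, F) be a strongly pseudoconvex complex Finsler manifold. Then the Ricci curvature and scalar curvature of the extended canonical connection ∇^c are related to those of the canonical connection ∇ by Ric_{∇^c} = Ric_∇ − √−1 𝔖 ∘ 𝔖̄ (i.e. K_{μν̄} = R_{μν̄} − (𝔖∘𝔖̄)_{μν̄}) and s_{∇^c} = s_∇ − ⟨𝔖, 𝔖⟩_{PM̃}. -/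
/-!
A local-coordinate formalization of strongly pseudoconvex complex Finsler metrics,
following Abate–Patrizio and Munteanu.  A point of the (slit) holomorphic tangent
bundle `M̃ = T^{1,0}M ∖ {0}` is represented in a holomorphic coordinate chart by a
pair `(z, v) ∈ ℂⁿ × ℂⁿ`.  All derivatives are genuine Wirtinger derivatives
(expressed through `fderiv ℝ`), and all the tensors of the Chern–Finsler
connection `D`, the canonical connection `∇` of Munteanu and its extension `∇ᶜ`
are defined by their standard local-coordinate expressions.  Horizontal
`(p,q)`-forms on the projective tangent bundle `PM̃` are represented by their
(alternating, `0`-homogeneous) coefficient arrays, in the convention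
`φ = (1/(p! q!)) φ_{I J̄} dz^I ∧ dz̄^J`.
The invariant integral `∫_{PM̃} · dμ_{PM̃}` (which exists when the base manifold
`M` is compact) is encoded by the structure `PTMIntegral`; a hypothesis
`(vol : PTMIntegral F)` plays the role of the compactness of `M`.
-/

open ComplexConjugate BigOperators

noncomputable section

namespace CFG

variable {n : ℕ}

lemma isOpen_slit (n : ℕ) : IsOpen (slit n) :=
  isOpen_compl_singleton.preimage continuous_snd

lemma fderiv_conj (f : Pt n → ℂ) (p w : Pt n) :
    fderiv ℝ (fun y => conj (f y)) p w = conj (fderiv ℝ f p w) := by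
  have h : (fun y => conj (f y)) = (⇑Complex.conjCLE ∘ f) := by
    funext y; simp [Complex.conjCLE_apply]
  rw [h, Complex.conjCLE.comp_fderiv]
  simp [Complex.conjCLE_apply]

lemma conj_dz (μ : Fin n) (f : Pt n → ℂ) (p : Pt n) :
    conj (dz μ f p) = dzb μ (fun y => conj (f y)) p := by
  simp only [dz, dzb, fderiv_conj, map_mul, map_sub, map_add, map_div₀, map_one,
    map_ofNat, Complex.conj_I]
  ring

lemma conj_dzb (μ : Fin n) (f : Pt n → ℂ) (p : Pt n) :
    conj (dzb μ f p) = dz μ (fun y => conj (f y)) p := by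
  simp only [dz, dzb, fderiv_conj, map_mul, map_sub, map_add, map_div₀, map_one,
    map_ofNat, Complex.conj_I]
  ring

lemma conj_dv (μ : Fin n) (f : Pt n → ℂ) (p : Pt n) :
    conj (dv μ f p) = dvb μ (fun y => conj (f y)) p := by
  simp only [dv, dvb, fderiv_conj, map_mul, map_sub, map_add, map_div₀, map_one,
    map_ofNat, Complex.conj_I]
  ring

lemma conj_dvb (μ : Fin n) (f : Pt n → ℂ) (p : Pt n) :
    conj (dvb μ f p) = dv μ (fun y => conj (f y)) p := by
  simp only [dv, dvb, fderiv_conj, map_mul, map_sub, map_add, map_div₀, map_one,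
    map_ofNat, Complex.conj_I]
  ring

lemma dz_congr {f g : Pt n → ℂ} {p : Pt n} (h : f =ᶠ[nhds p] g) (μ : Fin n) :
    dz μ f p = dz μ g p := by simp only [dz, h.fderiv_eq]

lemma dzb_congr {f g : Pt n → ℂ} {p : Pt n} (h : f =ᶠ[nhds p] g) (μ : Fin n) :
    dzb μ f p = dzb μ g p := by simp only [dzb, h.fderiv_eq]

lemma dv_congr {f g : Pt n → ℂ} {p : Pt n} (h : f =ᶠ[nhds p] g) (μ : Fin n) :
    dv μ f p = dv μ g p := by simp only [dv, h.fderiv_eq]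

lemma dvb_congr {f g : Pt n → ℂ} {p : Pt n} (h : f =ᶠ[nhds p] g) (μ : Fin n) :
    dvb μ f p = dvb μ g p := by simp only [dvb, h.fderiv_eq]

/-- Commutation of the fibre Wirtinger derivatives (Schwarz symmetry). -/
lemma dvb_dv_comm {G : Pt n → ℂ} {p : Pt n} (hG : ContDiffAt ℝ (⊤ : ℕ∞) G p) (α β : Fin n) :
    dvb α (dv β G) p = dv β (dvb α G) p := by
  have hd : DifferentiableAt ℝ (fderiv ℝ G) p :=
    (hG.fderiv_right (m := 1) (by exact WithTop.coe_le_coe.mpr le_top)).differentiableAt one_ne_zero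
  have hDap : ∀ v : Pt n, HasFDerivAt (fun q => fderiv ℝ G q v)
      ((ContinuousLinearMap.apply ℝ ℂ v).comp (fderiv ℝ (fderiv ℝ G) p)) p := fun v =>
    ((ContinuousLinearMap.apply ℝ ℂ v).hasFDerivAt).comp p hd.hasFDerivAt
  have hsymm : IsSymmSndFDerivAt ℝ G p := hG.isSymmSndFDerivAt (by rw [minSmoothness_of_isRCLikeNormedField]; exact WithTop.coe_le_coe.mpr le_top)
  have hfd : ∀ (v1 v2 : Pt n) (c : ℂ) (w : Pt n),
      fderiv ℝ (fun q => (1/2 : ℂ) * (fderiv ℝ G q v1 + c * fderiv ℝ G q v2)) p w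
        = (1/2 : ℂ) * (fderiv ℝ (fderiv ℝ G) p w v1 + c * fderiv ℝ (fderiv ℝ G) p w v2) := by
    intro v1 v2 c w
    have h := (((hDap v1).add ((hDap v2).const_mul c)).const_mul ((1/2 : ℂ))).fderiv
    rw [show (fun q => (1/2 : ℂ) * (fderiv ℝ G q v1 + c * fderiv ℝ G q v2))
        = (fun y => 1 / 2 * ((fun q => (fderiv ℝ G q) v1) + fun y => c * (fderiv ℝ G y) v2) y)
        from rfl, h]
    simp [ContinuousLinearMap.smul_apply, smul_eq_mul]; ring
  have e1 : dv β G = fun q => (1/2 : ℂ) * (fderiv ℝ G q (0, Pi.single β 1)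
      + (-Complex.I) * fderiv ℝ G q (0, Pi.single β Complex.I)) := by
    funext q; simp only [dv]; ring
  have e2 : dvb α G = fun q => (1/2 : ℂ) * (fderiv ℝ G q (0, Pi.single α 1)
      + Complex.I * fderiv ℝ G q (0, Pi.single α Complex.I)) := rfl
  rw [show dvb α (dv β G) p = (1/2 : ℂ) * (fderiv ℝ (dv β G) p (0, Pi.single α 1)
      + Complex.I * fderiv ℝ (dv β G) p (0, Pi.single α Complex.I)) from rfl,
    show dv β (dvb α G) p = (1/2 : ℂ) * (fderiv ℝ (dvb α G) p (0, Pi.single β 1)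
      - Complex.I * fderiv ℝ (dvb α G) p (0, Pi.single β Complex.I)) from rfl,
    e1, e2]
  rw [hfd, hfd, hfd, hfd]
  rw [hsymm ((0 : Fin n → ℂ), Pi.single β 1) ((0 : Fin n → ℂ), Pi.single α 1),
    hsymm ((0 : Fin n → ℂ), Pi.single β 1) ((0 : Fin n → ℂ), Pi.single α Complex.I),
    hsymm ((0 : Fin n → ℂ), Pi.single β Complex.I) ((0 : Fin n → ℂ), Pi.single α 1),
    hsymm ((0 : Fin n → ℂ), Pi.single β Complex.I) ((0 : Fin n → ℂ), Pi.single α Complex.I)]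
  ring

lemma sum_rev3 {M : Type*} [AddCommMonoid M] {m : ℕ} (h : Fin m → Fin m → Fin m → M) :
    ∑ x, ∑ y, ∑ z, h x y z = ∑ z, ∑ y, ∑ x, h x y z := by
  rw [Finset.sum_comm]
  rw [show (∑ y : Fin m, ∑ x : Fin m, ∑ z : Fin m, h x y z)
      = ∑ y : Fin m, ∑ z : Fin m, ∑ x : Fin m, h x y z from
    Finset.sum_congr rfl fun y _ => Finset.sum_comm]
  rw [Finset.sum_comm]

namespace SPCF

variable (F : SPCF n)

lemma contDiffAt_Gc {p : Pt n} (hp : p ∈ slit n) : ContDiffAt ℝ (⊤ : ℕ∞) F.Gc p := by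
  have h : ContDiffOn ℝ (⊤ : ℕ∞) F.Gc (slit n) :=
    Complex.ofRealCLM.contDiff.comp_contDiffOn F.smoothG
  exact h.contDiffAt ((isOpen_slit n).mem_nhds hp)

lemma conj_Gm {p : Pt n} (hp : p ∈ slit n) (α β : Fin n) :
    conj (F.Gm α β p) = F.Gm β α p := by
  have h1 : conj (F.Gm α β p) = dvb α (fun y => conj (dvb β F.Gc y)) p := conj_dv _ _ _
  have h2 : (fun y => conj (dvb β F.Gc y)) = dv β F.Gc := by
    funext y
    rw [conj_dvb]
    congr 1
    funext z
    exact Complex.conj_ofReal _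
  rw [h1, h2]
  exact dvb_dv_comm (F.contDiffAt_Gc hp) α β

lemma Gm_conj_eventually {p : Pt n} (hp : p ∈ slit n) (α β : Fin n) :
    (fun y => conj (F.Gm α β y)) =ᶠ[nhds p] F.Gm β α :=
  Filter.eventuallyEq_of_mem ((isOpen_slit n).mem_nhds hp) fun y hy => F.conj_Gm hy α β

lemma conj_δh (μ : Fin n) (f : Pt n → ℂ) (p : Pt n) :
    conj (F.δh μ f p) = F.δhb μ (fun y => conj (f y)) p := by
  simp only [δh, δhb, map_sub, map_sum, map_mul, conj_dz, conj_dv]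

lemma conj_δhb (μ : Fin n) (f : Pt n → ℂ) (p : Pt n) :
    conj (F.δhb μ f p) = F.δh μ (fun y => conj (f y)) p := by
  simp only [δh, δhb, map_sub, map_sum, map_mul, conj_dzb, conj_dvb, Complex.conj_conj]

lemma δh_congr {f g : Pt n → ℂ} {p : Pt n} (h : f =ᶠ[nhds p] g) (μ : Fin n) :
    F.δh μ f p = F.δh μ g p := by
  simp only [δh, dz_congr h, dv_congr h]

lemma δhb_congr {f g : Pt n → ℂ} {p : Pt n} (h : f =ᶠ[nhds p] g) (μ : Fin n) :
    F.δhb μ f p = F.δhb μ g p := by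
  simp only [δhb, dzb_congr h, dvb_congr h]

lemma isUnit_levi_det {p : Pt n} (hp : p ∈ slit n) : IsUnit (F.Levi p).det := by
  rw [isUnit_iff_ne_zero]
  intro hdet
  obtain ⟨v, hv0, hv⟩ := Matrix.exists_mulVec_eq_zero_iff.mpr hdet
  have hw : (fun i => conj (v i)) ≠ 0 := by
    intro h0
    apply hv0
    funext i
    have := congrFun h0 i
    simpa using congrArg conj this
  obtain ⟨hre, _⟩ := F.posdef p hp _ hw
  have hz : (∑ α, ∑ β, levi F.G α β p * (fun i => conj (v i)) α
      * conj ((fun i => conj (v i)) β)) = 0 := by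
    have hterm : ∀ α, (∑ β, levi F.G α β p * (fun i => conj (v i)) α
        * conj ((fun i => conj (v i)) β))
        = conj (v α) * ((F.Levi p).mulVec v α) := by
      intro α
      simp only [Matrix.mulVec, dotProduct, Finset.mul_sum, Levi, Gm, Matrix.of_apply]
      refine Finset.sum_congr rfl fun β _ => ?_
      simp only [Complex.conj_conj]
      ring
    rw [Finset.sum_congr rfl fun α _ => hterm α, hv]
    simp
  rw [hz] at hre
  simp at hre

lemma Gm_Ginv {p : Pt n} (hp : p ∈ slit n) (g a : Fin n) :
    ∑ β, F.Gm g β p * F.Ginv β a p = if g = a then 1 else 0 := by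
  have h := Matrix.mul_nonsing_inv _ (F.isUnit_levi_det hp)
  have h2 := congrFun (congrFun h g) a
  simpa [Matrix.mul_apply, Matrix.one_apply, Levi, Ginv] using h2

lemma conj_Ginv {p : Pt n} (hp : p ∈ slit n) (k σ : Fin n) :
    conj (F.Ginv k σ p) = F.Ginv σ k p := by
  have herm : (F.Levi p).IsHermitian := by
    ext i j
    simp only [Matrix.conjTranspose_apply, Levi, Matrix.of_apply, Complex.star_def]
    exact F.conj_Gm hp j i
  have hinv : ((F.Levi p)⁻¹).IsHermitian := herm.inv
  have h := congrFun (congrFun hinv σ) k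
  simpa [Matrix.conjTranspose_apply, Ginv, Complex.star_def] using h

lemma conj_Shl {p : Pt n} (hp : p ∈ slit n) (l σ μ : Fin n) :
    conj (F.Shl l σ μ p)
      = (1/2 : ℂ) * (F.δhb σ (F.Gm μ l) p - F.δhb l (F.Gm μ σ) p) := by
  simp only [Shl, map_mul, map_sub, map_div₀, map_one, map_ofNat, F.conj_δh]
  rw [F.δhb_congr (F.Gm_conj_eventually hp l μ) σ,
      F.δhb_congr (F.Gm_conj_eventually hp σ μ) l]

lemma Lhb_eq {p : Pt n} (hp : p ∈ slit n) (a μ σ : Fin n) :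
    F.Lhb a μ σ p = ∑ l, F.Ginv l a p * conj (F.Shl l σ μ p) := by
  simp only [Lhb, Finset.mul_sum]
  refine Finset.sum_congr rfl fun l _ => ?_
  rw [F.conj_Shl hp]
  ring

lemma conj_Lhb {p : Pt n} (hp : p ∈ slit n) (σ ν a : Fin n) :
    conj (F.Lhb σ ν a p) = ∑ k, F.Ginv σ k p * F.Shl k a ν p := by
  simp only [Lhb, map_mul, map_sum, map_sub, map_div₀, map_one, map_ofNat, F.conj_δhb]
  rw [Finset.mul_sum]
  refine Finset.sum_congr rfl fun k _ => ?_
  rw [F.δh_congr (F.Gm_conj_eventually hp ν k) a,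
      F.δh_congr (F.Gm_conj_eventually hp ν a) k,
      F.conj_Ginv hp k σ]
  simp only [Shl]
  ring

lemma Kc_eq (α β μ ν : Fin n) (p : Pt n) :
    F.Kc α β μ ν p = F.Rc α β μ ν p
      + ∑ g, (∑ σ, conj (F.Lhb σ ν α p) * F.Lhb g μ σ p) * F.Gm g β p := by
  simp only [Kc, Rc]
  have h1 : ∀ g, (F.δh μ (F.Lhb g α ν) p - F.δhb ν (F.Lh g α μ) p
      + ∑ σ, (F.Lhb σ α ν p * F.Lh g σ μ p
          + conj (F.Lhb σ ν α p) * F.Lhb g μ σ p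
          - F.Lh σ α μ p * F.Lhb g σ ν p)) * F.Gm g β p
      = (F.δh μ (F.Lhb g α ν) p - F.δhb ν (F.Lh g α μ) p
      + ∑ σ, (F.Lhb σ α ν p * F.Lh g σ μ p - F.Lh σ α μ p * F.Lhb g σ ν p)) * F.Gm g β p
      + (∑ σ, conj (F.Lhb σ ν α p) * F.Lhb g μ σ p) * F.Gm g β p := by
    intro g
    have h2 : (∑ σ, (F.Lhb σ α ν p * F.Lh g σ μ p
          + conj (F.Lhb σ ν α p) * F.Lhb g μ σ p
          - F.Lh σ α μ p * F.Lhb g σ ν p))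
        = (∑ σ, (F.Lhb σ α ν p * F.Lh g σ μ p - F.Lh σ α μ p * F.Lhb g σ ν p))
          + ∑ σ, conj (F.Lhb σ ν α p) * F.Lhb g μ σ p := by
      rw [← Finset.sum_add_distrib]
      exact Finset.sum_congr rfl fun σ _ => by ring
    rw [h2]; ring
  rw [Finset.sum_congr rfl fun g _ => h1 g, Finset.sum_add_distrib]
  ring

lemma Shl_antisymm (a c l : Fin n) (p : Pt n) : F.Shl a c l p = -F.Shl c a l p := by
  simp only [Shl]; ring

lemma ricK_eq {p : Pt n} (hp : p ∈ slit n) (μ ν : Fin n) :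
    F.ricK μ ν p = F.ricR μ ν p - F.SS μ ν p := by
  have hE1 : F.ricK μ ν p = F.ricR μ ν p
      + ∑ α, ∑ β, F.Ginv β α p
        * ∑ g, (∑ σ, conj (F.Lhb σ ν α p) * F.Lhb g μ σ p) * F.Gm g β p := by
    simp only [ricK, ricR, Kc_eq, mul_add, Finset.sum_add_distrib]
  have hE2 : ∀ α, (∑ β, F.Ginv β α p
        * ∑ g, (∑ σ, conj (F.Lhb σ ν α p) * F.Lhb g μ σ p) * F.Gm g β p)
      = ∑ σ, conj (F.Lhb σ ν α p) * F.Lhb α μ σ p := by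
    intro α
    have hb : ∀ β, F.Ginv β α p
          * ∑ g, (∑ σ, conj (F.Lhb σ ν α p) * F.Lhb g μ σ p) * F.Gm g β p
        = ∑ g, (∑ σ, conj (F.Lhb σ ν α p) * F.Lhb g μ σ p)
            * (F.Gm g β p * F.Ginv β α p) := by
      intro β
      rw [Finset.mul_sum]
      exact Finset.sum_congr rfl fun g _ => by ring
    rw [Finset.sum_congr rfl fun β _ => hb β, Finset.sum_comm]
    have h2 : ∀ g, (∑ β, (∑ σ, conj (F.Lhb σ ν α p) * F.Lhb g μ σ p)
          * (F.Gm g β p * F.Ginv β α p))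
        = (∑ σ, conj (F.Lhb σ ν α p) * F.Lhb g μ σ p) * (if g = α then 1 else 0) := by
      intro g
      rw [← Finset.mul_sum, F.Gm_Ginv hp g α]
    rw [Finset.sum_congr rfl fun g _ => h2 g]
    simp only [mul_ite, mul_one, mul_zero]
    exact Fintype.sum_ite_eq' α _
  have hE3 : (∑ α, ∑ σ, conj (F.Lhb σ ν α p) * F.Lhb α μ σ p) = -F.SS μ ν p := by
    have hterm : ∀ α σ, conj (F.Lhb σ ν α p) * F.Lhb α μ σ p
        = ∑ k, ∑ l, (F.Ginv σ k p * F.Shl k α ν p)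
            * (F.Ginv l α p * conj (F.Shl l σ μ p)) := by
      intro α σ
      rw [F.conj_Lhb hp, F.Lhb_eq hp, Finset.sum_mul_sum]
    calc (∑ α, ∑ σ, conj (F.Lhb σ ν α p) * F.Lhb α μ σ p)
        = ∑ α, ∑ σ, ∑ k, ∑ l, (F.Ginv σ k p * F.Shl k α ν p)
            * (F.Ginv l α p * conj (F.Shl l σ μ p)) :=
          Finset.sum_congr rfl fun α _ => Finset.sum_congr rfl fun σ _ => hterm α σ
      _ = ∑ α, ∑ l, ∑ k, ∑ σ, (F.Ginv σ k p * F.Shl k α ν p)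
            * (F.Ginv l α p * conj (F.Shl l σ μ p)) :=
          Finset.sum_congr rfl fun α _ => sum_rev3 _
      _ = -F.SS μ ν p := by
          simp only [SS, ← Finset.sum_neg_distrib]
          refine Finset.sum_congr rfl fun a _ => Finset.sum_congr rfl fun b _ =>
            Finset.sum_congr rfl fun c _ => Finset.sum_congr rfl fun d _ => ?_
          rw [F.Shl_antisymm c a ν]
          ring
  rw [hE1, Finset.sum_congr rfl fun α _ => hE2 α, hE3]
  ring

end SPCF
end CFG

open CFG

/-- formulas (4.14) and (4.15).  For a strongly pseudoconvex
complex Finsler manifold, the Ricci and scalar curvatures of the extended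
canonical connection `∇ᶜ` satisfy `K_{μν̄} = R_{μν̄} - (𝔖∘𝔖̄)_{μν̄}` (hence
`Ric_{∇ᶜ} = Ric_∇ - √-1 𝔖∘𝔖̄`) and `s_{∇ᶜ} = s_∇ - ⟨𝔖, 𝔖⟩_{PM̃}`. -/
theorem statement7 {n : ℕ} (hn : 2 ≤ n) (F : SPCF n) :
    (∀ (μ ν : Fin n), ∀ x ∈ slit n, F.ricK μ ν x = F.ricR μ ν x - F.SS μ ν x) ∧
    (∀ x ∈ slit n, F.sK x = F.sR x - F.SnormSq x) := by
  constructor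
  · intro μ ν x hx
    exact F.ricK_eq hx μ ν
  · intro x hx
    have h : ∀ μ ν : Fin n, F.Ginv ν μ x * F.ricK μ ν x
        = F.Ginv ν μ x * F.ricR μ ν x - F.Ginv ν μ x * F.SS μ ν x := by
      intro μ ν
      rw [F.ricK_eq hx μ ν]
      ring
    simp only [SPCF.sK, SPCF.sR, SPCF.SnormSq, h, Finset.sum_sub_distrib]
end
end
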